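/- The operator C_∞(t,x) is positive semidefinite on ℓ²(ℕ); in particular 1 + C_∞(t,x) is invertible with bounded inverse. -/

import Mathlib

/-!
The matrix is a Gram matrix: with `w j = c j * exp (4 κ_j³ t - κ_j x)`, every finite quadratic form
`∑ v_j v_l w_j w_l / (κ_j + κ_l)` equals `∫₀^∞ (∑ v_j w_j e^{-κ_j u})² du ≥ 0`. The partial sums of
an `ℓ²` vector converge to it, so `⟪f, C f⟫` is a limit of such forms and is nonnegative; symmetry of
the entries passes to `C` the same way. Then `⟪(1 + C) f, f⟫ ≥ ‖f‖²`, which makes `1 + C` invertible.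
-/

open scoped RealInnerProductSpace

noncomputable section

abbrev H2 : Type := lp (fun _ : ℕ => ℝ) 2

def solitonEntry (κ c : ℕ → ℝ) (t x : ℝ) (j l : ℕ) : ℝ :=
  c j * c l / (κ j + κ l) * Real.exp (4 * ((κ j) ^ 3 + (κ l) ^ 3) * t - (κ j + κ l) * x)

open MeasureTheory Filter Topology Set

theorem ContinuousLinearMap.IsPositive.isUnit_one_add {𝕜 E : Type*} [RCLike 𝕜]
    [NormedAddCommGroup E] [InnerProductSpace 𝕜 E] [CompleteSpace E] {T : E →L[𝕜] E}
    (hT : T.IsPositive) : IsUnit (1 + T) := by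
  refine isUnit_of_forall_le_norm_inner_map _ one_pos fun v => ?_
  calc ‖v‖ ^ 2 * ((1 : NNReal) : ℝ)
      ≤ ‖v‖ ^ 2 + RCLike.re (inner 𝕜 (T v) v) := by simpa using hT.re_inner_nonneg_left v
    _ = RCLike.re (inner 𝕜 ((1 + T) v) v) := by simp [inner_add_left]
    _ ≤ ‖inner 𝕜 ((1 + T) v) v‖ := RCLike.re_le_norm _

section MatrixEntries

variable {ι : Type*} [DecidableEq ι] {T : lp (fun _ : ι => ℝ) 2 →L[ℝ] lp (fun _ : ι => ℝ) 2}
  {a : ι → ι → ℝ}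

theorem lp.inner_sum_single_map_sum_single
    (hT : ∀ j l, ⟪lp.single 2 j (1 : ℝ), T (lp.single 2 l (1 : ℝ))⟫ = a j l)
    (v w : ι → ℝ) (s : Finset ι) :
    ⟪∑ j ∈ s, lp.single 2 j (v j), T (∑ l ∈ s, lp.single 2 l (w l))⟫ =
      ∑ j ∈ s, ∑ l ∈ s, v j * w l * a j l := by
  rw [map_sum, sum_inner]
  refine Finset.sum_congr rfl fun j _ => ?_
  rw [inner_sum]
  refine Finset.sum_congr rfl fun l _ => ?_
  have single_eq : ∀ i (r : ℝ), (lp.single 2 i r : lp (fun _ : ι => ℝ) 2) =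
      r • lp.single 2 i (1 : ℝ) := fun i r => by
    rw [← lp.single_smul, smul_eq_mul, mul_one]
  rw [single_eq j, single_eq l, T.map_smul, real_inner_smul_left, real_inner_smul_right, hT]
  ring

theorem lp.tendsto_sum_sum_mul_inner_map
    (hT : ∀ j l, ⟪lp.single 2 j (1 : ℝ), T (lp.single 2 l (1 : ℝ))⟫ = a j l)
    (f g : lp (fun _ : ι => ℝ) 2) :
    Tendsto (fun s : Finset ι => ∑ j ∈ s, ∑ l ∈ s, f j * g l * a j l) atTop (𝓝 ⟪f, T g⟫) := by
  have hf : Tendsto (fun s : Finset ι => ∑ j ∈ s, lp.single 2 j (f j)) atTop (𝓝 f) :=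
    lp.hasSum_single ENNReal.ofNat_ne_top f
  have hg : Tendsto (fun s : Finset ι => ∑ l ∈ s, lp.single 2 l (g l)) atTop (𝓝 g) :=
    lp.hasSum_single ENNReal.ofNat_ne_top g
  simpa only [Function.comp_def, lp.inner_sum_single_map_sum_single hT] using
    hf.inner (𝕜 := ℝ) ((T.continuous.tendsto g).comp hg)

theorem lp.isPositive_of_entries
    (hT : ∀ j l, ⟪lp.single 2 j (1 : ℝ), T (lp.single 2 l (1 : ℝ))⟫ = a j l)
    (hsymm : ∀ j l, a j l = a l j)
    (hnonneg : ∀ (v : ι → ℝ) (s : Finset ι), 0 ≤ ∑ j ∈ s, ∑ l ∈ s, v j * v l * a j l) :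
    T.IsPositive := by
  have hlim := lp.tendsto_sum_sum_mul_inner_map hT
  refine (T.isPositive_iff).2 ⟨fun f g => ?_, fun f => ?_⟩
  · rw [real_inner_comm]
    refine tendsto_nhds_unique (hlim g f) ((hlim f g).congr fun s => ?_)
    rw [Finset.sum_comm]
    exact Finset.sum_congr rfl fun l _ => Finset.sum_congr rfl fun j _ => by rw [hsymm]; ring
  · rw [real_inner_comm]
    exact ge_of_tendsto' (hlim f f) (hnonneg f)

end MatrixEntries

theorem integral_exp_neg_mul_Ioi_zero {b : ℝ} (hb : 0 < b) :
    ∫ u in Ioi (0 : ℝ), Real.exp (-b * u) = b⁻¹ := by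
  simpa only [mul_zero, Real.exp_zero, neg_div_neg_eq, one_div] using
    integral_exp_mul_Ioi (neg_lt_zero.2 hb) 0

theorem sum_sum_mul_mul_inv_add_nonneg {ι : Type*} {κ : ι → ℝ} (hκ : ∀ j, 0 < κ j)
    (v : ι → ℝ) (s : Finset ι) :
    0 ≤ ∑ j ∈ s, ∑ l ∈ s, v j * v l * (κ j + κ l)⁻¹ := by
  set e : ι → ℝ → ℝ := fun j u => v j * Real.exp (-κ j * u)
  have he : ∀ j l, (fun u => e j u * e l u) = fun u => v j * v l * Real.exp (-(κ j + κ l) * u) :=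
    fun j l => funext fun u => by
      simp only [e, neg_add, add_mul, Real.exp_add]
      ring
  have hκ₂ : ∀ j l, 0 < κ j + κ l := fun j l => add_pos (hκ j) (hκ l)
  have hint : ∀ j l, IntegrableOn (fun u => e j u * e l u) (Ioi 0) := fun j l => by
    rw [he]
    exact (exp_neg_integrableOn_Ioi 0 (hκ₂ j l)).const_mul _
  calc 0 ≤ ∫ u in Ioi (0 : ℝ), (∑ j ∈ s, e j u) ^ 2 :=
        setIntegral_nonneg measurableSet_Ioi fun u _ => sq_nonneg _
    _ = ∑ j ∈ s, ∑ l ∈ s, ∫ u in Ioi (0 : ℝ), e j u * e l u := by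
        simp_rw [sq, Finset.sum_mul_sum]
        rw [integral_finsetSum _ fun j _ => integrable_finsetSum _ fun l _ => hint j l]
        exact Finset.sum_congr rfl fun j _ => integral_finsetSum _ fun l _ => hint j l
    _ = ∑ j ∈ s, ∑ l ∈ s, v j * v l * (κ j + κ l)⁻¹ := by
        simp_rw [he, integral_const_mul, integral_exp_neg_mul_Ioi_zero (hκ₂ _ _)]

theorem solitonEntry_eq (κ c : ℕ → ℝ) (t x : ℝ) (j l : ℕ) :
    solitonEntry κ c t x j l =
      c j * Real.exp (4 * κ j ^ 3 * t - κ j * x) * (c l * Real.exp (4 * κ l ^ 3 * t - κ l * x)) *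
        (κ j + κ l)⁻¹ := by
  rw [solitonEntry, div_eq_mul_inv, show 4 * (κ j ^ 3 + κ l ^ 3) * t - (κ j + κ l) * x =
    (4 * κ j ^ 3 * t - κ j * x) + (4 * κ l ^ 3 * t - κ l * x) by ring, Real.exp_add]
  ring

theorem statement2_general (κ c : ℕ → ℝ) (hκ : ∀ j, 0 < κ j)
    (t x : ℝ)
    (Cinf : H2 →L[ℝ] H2)
    (hCinf : ∀ j l : ℕ, ⟪lp.single 2 j (1 : ℝ), Cinf (lp.single 2 l (1 : ℝ))⟫ =
      solitonEntry κ c t x j l) :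
    Cinf.IsPositive ∧ IsUnit ((1 : H2 →L[ℝ] H2) + Cinf) := by
  have hpos : Cinf.IsPositive := by
    refine lp.isPositive_of_entries hCinf (fun j l => ?_) (fun v s => ?_)
    · rw [solitonEntry_eq, solitonEntry_eq, add_comm (κ l)]
      ring
    · refine (sum_sum_mul_mul_inv_add_nonneg hκ
        (fun j => v j * (c j * Real.exp (4 * κ j ^ 3 * t - κ j * x))) s).trans_eq
        (Finset.sum_congr rfl fun j _ => Finset.sum_congr rfl fun l _ => ?_)
      rw [solitonEntry_eq]
      ring
  exact ⟨hpos, hpos.isUnit_one_add⟩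

/-- `C_∞(t,x)` is a positive (semidefinite) operator on ℓ²(ℕ); in particular
`1 + C_∞(t,x)` is boundedly invertible. -/
theorem statement2 (κ c : ℕ → ℝ) (hκ : ∀ j, 0 < κ j)
    (hbd : ∃ M, ∀ j, κ j ≤ M) (hinj : Function.Injective κ) (hc : ∀ j, 0 < c j)
    (hsum : Summable (fun j => (c j) ^ 2 / κ j)) (t x : ℝ)
    (Cinf : H2 →L[ℝ] H2)
    (hCinf : ∀ j l : ℕ, ⟪lp.single 2 j (1 : ℝ), Cinf (lp.single 2 l (1 : ℝ))⟫ =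
      solitonEntry κ c t x j l) :
    Cinf.IsPositive ∧ IsUnit ((1 : H2 →L[ℝ] H2) + Cinf) :=
  statement2_general κ c hκ t x Cinf hCinf

end
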